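/- arXiv:2103.08087 — 2 statements merged into one kernel-verified Lean document; each statement's English description precedes it below -/
import Mathlib

section
/- Let K be an algebraically closed field and let U, V, W be finite-dimensional K-vector spaces with endomorphisms P : U → U, Q : V → V, R : W → W. Suppose a : U → V, b : V → W, c : W → U are linear maps forming a periodic exact triangle (range a = ker b, range b = ker c, range c = ker a) and intertwining the endomorphisms: a ∘ P = Q ∘ a, b ∘ Q = R ∘ b, c ∘ R = P ∘ c. Fix λ ∈ K and suppose the generalized λ-eigenspace of R is the zero subspace. Then a restricts to a linear isomorphism from the generalized λ-eigenspace of P onto the generalized λ-eigenspace of Q. -/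
open Module LinearMap

/-- If `f ∘ S = T ∘ f` then `f ∘ (S - μ)^n = (T - μ)^n ∘ f`. -/
lemma aux_intertwine {K U V : Type*} [Field K]
    [AddCommGroup U] [Module K U] [AddCommGroup V] [Module K V]
    (S : Module.End K U) (T : Module.End K V) (f : U →ₗ[K] V)
    (h : f ∘ₗ S = T ∘ₗ f) (μ : K) (n : ℕ) :
    f ∘ₗ ((S - μ • 1) ^ n) = ((T - μ • 1) ^ n) ∘ₗ f := by
  have h1 : f ∘ₗ (S - μ • 1) = (T - μ • 1) ∘ₗ f := by
    ext x
    simp only [LinearMap.comp_apply, LinearMap.sub_apply, LinearMap.smul_apply,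
      Module.End.one_apply, map_sub, map_smul]
    have := congrArg (fun g => g x) h
    simpa using this
  have h1' : ∀ y, f ((S - μ • 1) y) = (T - μ • 1) (f y) :=
    fun y => congrArg (fun g => g y) h1
  induction n with
  | zero => ext x; simp
  | succ n ih =>
    have ih' : ∀ y, f (((S - μ • 1) ^ n) y) = ((T - μ • 1) ^ n) (f y) :=
      fun y => congrArg (fun g => g y) ih
    ext x
    simp only [LinearMap.comp_apply]
    rw [pow_succ', pow_succ', Module.End.mul_apply, Module.End.mul_apply, h1', ih']

/-- In a periodic exact triangle of finite-dimensional vector spaces over an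
algebraically closed field, intertwining endomorphisms `P`, `Q`, `R`, if the
generalized `μ`-eigenspace of `R` vanishes, then the first map of the triangle
restricts to an isomorphism between the generalized `μ`-eigenspaces of `P`
and `Q`. -/
theorem exact_triangle_restrict_genEigenspace_bijective
    {K U V W : Type*} [Field K] [IsAlgClosed K]
    [AddCommGroup U] [Module K U] [FiniteDimensional K U]
    [AddCommGroup V] [Module K V] [FiniteDimensional K V]
    [AddCommGroup W] [Module K W] [FiniteDimensional K W]
    (P : Module.End K U) (Q : Module.End K V) (R : Module.End K W)
    (a : U →ₗ[K] V) (b : V →ₗ[K] W) (c : W →ₗ[K] U)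
    (hab : LinearMap.range a = LinearMap.ker b)
    (hbc : LinearMap.range b = LinearMap.ker c)
    (hca : LinearMap.range c = LinearMap.ker a)
    (haP : a ∘ₗ P = Q ∘ₗ a) (hbQ : b ∘ₗ Q = R ∘ₗ b) (hcR : c ∘ₗ R = P ∘ₗ c)
    (μ : K) (hR : R.maxGenEigenspace μ = ⊥) :
    ∃ h : ∀ x ∈ P.maxGenEigenspace μ, a x ∈ Q.maxGenEigenspace μ,
      Function.Bijective (a.restrict h) := by
  classical
  set n : ℕ := Module.finrank K U + Module.finrank K V + Module.finrank K W with hn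
  set NP : Module.End K U := (P - μ • 1) ^ n with hNP
  set NQ : Module.End K V := (Q - μ • 1) ^ n with hNQ
  set NR : Module.End K W := (R - μ • 1) ^ n with hNR
  have hnU : Module.finrank K U ≤ n := by omega
  have hnV : Module.finrank K V ≤ n := by omega
  have hnW : Module.finrank K W ≤ n := by omega
  -- maxGen = ker of n-th power
  have hkerP : P.maxGenEigenspace μ = LinearMap.ker NP := by
    rw [P.maxGenEigenspace_eq_genEigenspace_finrank,
      ← P.genEigenspace_eq_genEigenspace_finrank_of_le μ hnU, Module.End.genEigenspace_nat]
  have hkerQ : Q.maxGenEigenspace μ = LinearMap.ker NQ := by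
    rw [Q.maxGenEigenspace_eq_genEigenspace_finrank,
      ← Q.genEigenspace_eq_genEigenspace_finrank_of_le μ hnV, Module.End.genEigenspace_nat]
  have hkerR : LinearMap.ker NR = ⊥ := by
    rw [← hR, R.maxGenEigenspace_eq_genEigenspace_finrank,
      ← R.genEigenspace_eq_genEigenspace_finrank_of_le μ hnW, Module.End.genEigenspace_nat]
  -- ker NP^2 = ker NP
  have hkerP2 : ∀ x : U, NP (NP x) = 0 → NP x = 0 := by
    intro x hx
    have h2n : ((P - μ • 1) ^ (n + n)) x = 0 := by
      rw [pow_add]; exact hx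
    have hmem : x ∈ P.genEigenspace μ ((n + n : ℕ) : ℕ∞) := by
      rw [Module.End.genEigenspace_nat]; exact h2n
    rw [P.genEigenspace_eq_genEigenspace_finrank_of_le μ (show Module.finrank K U ≤ n + n by omega),
      ← P.genEigenspace_eq_genEigenspace_finrank_of_le μ hnU,
      Module.End.genEigenspace_nat] at hmem
    exact hmem
  have haN : a ∘ₗ NP = NQ ∘ₗ a := aux_intertwine P Q a haP μ n
  have hbN : b ∘ₗ NQ = NR ∘ₗ b := aux_intertwine Q R b hbQ μ n
  have hcN : c ∘ₗ NR = NP ∘ₗ c := aux_intertwine R P c hcR μ n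
  have haN' : ∀ x, a (NP x) = NQ (a x) := fun x => congrArg (fun g => g x) haN
  have hbN' : ∀ x, b (NQ x) = NR (b x) := fun x => congrArg (fun g => g x) hbN
  have hcN' : ∀ x, c (NR x) = NP (c x) := fun x => congrArg (fun g => g x) hcN
  -- NR bijective
  have hNRinj : Function.Injective NR := LinearMap.ker_eq_bot.mp hkerR
  have hNRsurj : Function.Surjective NR :=
    (LinearMap.injective_iff_surjective).mp hNRinj
  -- mapsTo
  have h : ∀ x ∈ P.maxGenEigenspace μ, a x ∈ Q.maxGenEigenspace μ := by
    intro x hx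
    rw [hkerP, LinearMap.mem_ker] at hx
    rw [hkerQ, LinearMap.mem_ker, ← haN', hx, map_zero]
  refine ⟨h, ?_, ?_⟩
  · -- injective
    rintro ⟨x, hx⟩ ⟨y, hy⟩ hxy
    have hxy' : a (x - y) = 0 := by
      have := congrArg Subtype.val hxy
      simp only [LinearMap.restrict_apply] at this
      simp only [map_sub, sub_eq_zero]
      exact this
    have hmem : x - y ∈ LinearMap.ker a := LinearMap.mem_ker.mpr hxy'
    rw [← hca] at hmem
    obtain ⟨w, hw⟩ := hmem
    obtain ⟨w', rfl⟩ := hNRsurj w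
    have hNPxy : NP (x - y) = 0 := by
      rw [hkerP, LinearMap.mem_ker] at hx hy
      simp [map_sub, hx, hy]
    rw [← hw, hcN'] at hNPxy
    have h0 : NP (c w') = 0 := hkerP2 _ hNPxy
    have : x - y = 0 := by rw [← hw, hcN', h0]
    ext
    exact sub_eq_zero.mp this
  · -- surjective
    rintro ⟨y, hy⟩
    have hby : b y = 0 := by
      have : NR (b y) = 0 := by
        rw [← hbN']
        rw [hkerQ, LinearMap.mem_ker] at hy
        rw [hy, map_zero]
      exact hNRinj (by simpa using this)
    have : y ∈ LinearMap.range a := by rw [hab]; exact LinearMap.mem_ker.mpr hby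
    obtain ⟨x, hx⟩ := this
    have hNPx : a (NP x) = 0 := by
      rw [haN', hx]
      rw [hkerQ, LinearMap.mem_ker] at hy
      exact hy
    have : NP x ∈ LinearMap.range c := by rw [hca]; exact LinearMap.mem_ker.mpr hNPx
    obtain ⟨w, hw⟩ := this
    obtain ⟨w', rfl⟩ := hNRsurj w
    have hmem : x - c w' ∈ P.maxGenEigenspace μ := by
      rw [hkerP, LinearMap.mem_ker, map_sub, ← hcN', hw, sub_self]
    refine ⟨⟨x - c w', hmem⟩, ?_⟩
    ext
    simp only [LinearMap.restrict_apply, map_sub]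
    have hcw : a (c w') = 0 := by
      have : c w' ∈ LinearMap.ker a := by rw [← hca]; exact ⟨w', rfl⟩
      exact this
    rw [hcw, sub_zero, hx]
end

section
/- Let K be a field and let X, S, Y, Z, P, Q, R, R', S₊, M, Y', Z' be K-vector spaces. Suppose given: (a) linear maps e : X → S, d : S → Z, f : X → Y injective, g : Y → Z, with g ∘ f = d ∘ e; (b) a subspace W' ≤ S with W' ≤ ker d; (c) h : P → Y injective with range h = ker g; (d) j : Q → X, i : Q → P with h ∘ i = f ∘ j, k : P → R with range i = ker k, l : R → R' injective, m : Y → R' with m ∘ h = l ∘ k and range f ≤ ker m; (e) n : Q → S₊, o : S₊ → S with o ∘ n = e ∘ j, p : M → S₊ with ker o ≤ range p; (f) subspaces W₊, N ≤ S₊ that are complementary (W₊ ⊓ N = ⊥ and W₊ ⊔ N = S₊), and a subspace N' ≤ S with W' ⊓ N' = ⊥, such that o maps W₊ into W' and N into N'; (g) q : Q → Y' injective, v : Y' → Z' injective, u : S₊ → Z' with u ∘ n = v ∘ q, u ∘ p = 0, and W₊ ≤ ker u. Then (range e) ⊓ W' = ⊥. -/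
/-- The linear-algebra abstraction of the diagram chase proving the main
theorem in the case `ν♯(α) < 0`, `ν♯(β) > 0`: under the stated exactness,
commutativity, injectivity, complementarity, and vanishing hypotheses, the
image of `e` meets the extremal subspace `W'` trivially. -/
theorem range_inf_extremal_eq_bot
    {K X S Y Z P Q R R' Splus M Y' Z' : Type*} [Field K]
    [AddCommGroup X] [Module K X] [AddCommGroup S] [Module K S]
    [AddCommGroup Y] [Module K Y] [AddCommGroup Z] [Module K Z]
    [AddCommGroup P] [Module K P] [AddCommGroup Q] [Module K Q]
    [AddCommGroup R] [Module K R] [AddCommGroup R'] [Module K R']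
    [AddCommGroup Splus] [Module K Splus] [AddCommGroup M] [Module K M]
    [AddCommGroup Y'] [Module K Y'] [AddCommGroup Z'] [Module K Z']
    -- (a)
    (e : X →ₗ[K] S) (d : S →ₗ[K] Z) (f : X →ₗ[K] Y) (g : Y →ₗ[K] Z)
    (hf : Function.Injective f) (hgf : g ∘ₗ f = d ∘ₗ e)
    -- (b)
    (W' : Submodule K S) (hW'd : W' ≤ LinearMap.ker d)
    -- (c)
    (h : P →ₗ[K] Y) (hh : Function.Injective h)
    (hhg : LinearMap.range h = LinearMap.ker g)
    -- (d)
    (j : Q →ₗ[K] X) (i : Q →ₗ[K] P) (hhi : h ∘ₗ i = f ∘ₗ j)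
    (k : P →ₗ[K] R) (hik : LinearMap.range i = LinearMap.ker k)
    (l : R →ₗ[K] R') (hl : Function.Injective l)
    (m : Y →ₗ[K] R') (hmh : m ∘ₗ h = l ∘ₗ k)
    (hfm : LinearMap.range f ≤ LinearMap.ker m)
    -- (e)
    (n : Q →ₗ[K] Splus) (o : Splus →ₗ[K] S) (hon : o ∘ₗ n = e ∘ₗ j)
    (p : M →ₗ[K] Splus) (hop : LinearMap.ker o ≤ LinearMap.range p)
    -- (f)
    (Wplus N : Submodule K Splus) (hWN : Wplus ⊓ N = ⊥) (hWNtop : Wplus ⊔ N = ⊤)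
    (N' : Submodule K S) (hW'N' : W' ⊓ N' = ⊥)
    (hoW : Submodule.map o Wplus ≤ W') (hoN : Submodule.map o N ≤ N')
    -- (g)
    (q : Q →ₗ[K] Y') (hq : Function.Injective q)
    (v : Y' →ₗ[K] Z') (hv : Function.Injective v)
    (u : Splus →ₗ[K] Z') (hun : u ∘ₗ n = v ∘ₗ q) (hup : u ∘ₗ p = 0)
    (hWu : Wplus ≤ LinearMap.ker u) :
    LinearMap.range e ⊓ W' = ⊥ := by
  rw [Submodule.eq_bot_iff]
  rintro s ⟨⟨x, rfl⟩, hsW⟩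
  -- d (e x) = 0 since e x ∈ W' ≤ ker d
  have hde : g (f x) = 0 := by
    have := LinearMap.congr_fun hgf x
    simp only [LinearMap.comp_apply] at this
    rw [this]; exact hW'd hsW
  -- f x ∈ range h
  obtain ⟨y₀, hy₀⟩ : f x ∈ LinearMap.range h := by rw [hhg]; exact hde
  -- k y₀ = 0
  have hky : k y₀ = 0 := by
    apply hl
    have h1 := LinearMap.congr_fun hmh y₀
    simp only [LinearMap.comp_apply] at h1
    rw [map_zero, ← h1, hy₀]
    exact hfm ⟨x, rfl⟩
  obtain ⟨q₀, hq₀⟩ : y₀ ∈ LinearMap.range i := by rw [hik]; exact hky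
  have hxj : x = j q₀ := by
    apply hf
    have := LinearMap.congr_fun hhi q₀
    simp only [LinearMap.comp_apply] at this
    rw [hq₀, hy₀] at this
    exact this
  have hse : e x = o (n q₀) := by
    have := LinearMap.congr_fun hon q₀
    simp only [LinearMap.comp_apply] at this
    rw [this, ← hxj]
  -- split n q₀ = w + z
  have hmem : n q₀ ∈ Wplus ⊔ N := by rw [hWNtop]; trivial
  obtain ⟨w, hw, z, hz, hwz⟩ := Submodule.mem_sup.mp hmem
  -- o z ∈ W' ⊓ N'
  have hoz : o z = 0 := by
    have h1 : o z ∈ N' := hoN ⟨z, hz, rfl⟩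
    have h2 : o z ∈ W' := by
      have : o z = e x - o w := by rw [hse, ← hwz, map_add]; abel
      rw [this]
      exact W'.sub_mem hsW (hoW ⟨w, hw, rfl⟩)
    have : o z ∈ W' ⊓ N' := ⟨h2, h1⟩
    rwa [hW'N', Submodule.mem_bot] at this
  obtain ⟨m₀, hm₀⟩ := hop (LinearMap.mem_ker.mpr hoz)
  have huz : u z = 0 := by rw [← hm₀]; exact LinearMap.congr_fun hup m₀
  have huw : u w = 0 := hWu hw
  have hun0 : u (n q₀) = 0 := by rw [← hwz, map_add, huw, huz, add_zero]
  have : v (q q₀) = 0 := by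
    have := LinearMap.congr_fun hun q₀
    simp only [LinearMap.comp_apply] at this
    rw [← this, hun0]
  have hq0 : q₀ = 0 := by
    apply hq
    apply hv
    rw [this, map_zero, map_zero]
  rw [hxj, hq0, map_zero, map_zero]
end
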